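/- arXiv:2203.00681 — 5 statements merged into one kernel-verified Lean document; each statement's English description precedes it below -/
import Mathlib

section
/- For integers n ≥ 3 and k ≥ 2, under the identification of the vertex set Z_n × {0,…,k−1} of the ring-of-cliques graph G_RC(n,k) with the index set of ℝ^{nk} = ℝ^n ⊗ ℝ^k, the Laplacian of G_RC(n,k) decomposes as L(G_RC(n,k)) = I_n ⊗ L(K_k) + L(C_n) ⊗ B, where B is the k×k matrix with a single 1 in entry (0,0) and zeros elsewhere. -/
open Matrix Kronecker

/-- The ring-of-cliques graph `G_RC(n,k)`: `n` cliques of size `k`, whose `0`-th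
vertices are connected in a ring. Vertex `(i, a)` is adjacent to `(j, b)` iff
either `i = j` and `a ≠ b`, or `a = b = 0` and `j ≡ i ± 1 (mod n)`. -/
def ringClique (n k : ℕ) : SimpleGraph (Fin n × Fin k) where
  Adj v w := v ≠ w ∧ (v.1 = w.1 ∨
    (v.2.val = 0 ∧ w.2.val = 0 ∧
      (w.1.val = (v.1.val + 1) % n ∨ v.1.val = (w.1.val + 1) % n)))
  symm := by
    constructor
    rintro v w ⟨hne, h⟩
    refine ⟨fun h' => hne h'.symm, ?_⟩
    rcases h with h | ⟨h1, h2, h3⟩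
    · exact Or.inl h.symm
    · exact Or.inr ⟨h2, h1, h3.symm⟩
  loopless := ⟨fun v h => h.1 rfl⟩

instance (n k : ℕ) : DecidableRel (ringClique n k).Adj := fun v w =>
  decidable_of_iff (v ≠ w ∧ (v.1 = w.1 ∨
    (v.2.val = 0 ∧ w.2.val = 0 ∧
      (w.1.val = (v.1.val + 1) % n ∨ v.1.val = (w.1.val + 1) % n)))) Iff.rfl

/-- The ring (cycle) graph on `n` vertices: `i` is adjacent to `j` iff `j ≡ i ± 1 (mod n)`. -/
def ringGraph (n : ℕ) : SimpleGraph (Fin n) where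
  Adj i j := i ≠ j ∧ (j.val = (i.val + 1) % n ∨ i.val = (j.val + 1) % n)
  symm := by
    constructor
    rintro i j ⟨hne, h⟩
    exact ⟨fun h' => hne h'.symm, h.symm⟩
  loopless := ⟨fun v h => h.1 rfl⟩

instance (n : ℕ) : DecidableRel (ringGraph n).Adj := fun i j =>
  decidable_of_iff (i ≠ j ∧ (j.val = (i.val + 1) % n ∨ i.val = (j.val + 1) % n)) Iff.rfl

/-!
Both sides have zero row sums (a row sum of a Kronecker product factors, and one factor is a row
sum of a Laplacian), so it suffices to compare off-diagonal entries; there the two vertices lie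
either in the same clique, where only `I_n ⊗ L(K_k)` contributes, or in different cliques, where
only `L(C_n) ⊗ B` does and is nonzero exactly between the `0`-th vertices of adjacent cliques.
-/

namespace SimpleGraph

variable {V R : Type*} [Fintype V] [DecidableEq V] [Ring R] (G : SimpleGraph V) [DecidableRel G.Adj]

theorem sum_lapMatrix_apply (v : V) : ∑ w, G.lapMatrix R v w = 0 := by
  simpa [mulVec, dotProduct] using congrFun (G.lapMatrix_mulVec_const_eq_zero (R := R)) v

theorem lapMatrix_apply_of_ne {v w : V} (h : v ≠ w) :
    G.lapMatrix R v w = -G.adjMatrix R v w := by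
  simp [lapMatrix, degMatrix, h]

theorem lapMatrix_eq_of_sum_eq_zero {M : Matrix V V R} (hsum : ∀ v, ∑ w, M v w = 0)
    (hoff : ∀ v w, v ≠ w → M v w = -G.adjMatrix R v w) : G.lapMatrix R = M := by
  have hoff' : ∀ v w, v ≠ w → (G.lapMatrix R - M) v w = 0 := fun v w h => by
    rw [Matrix.sub_apply, lapMatrix_apply_of_ne G h, hoff v w h, sub_self]
  ext v w
  rw [← sub_eq_zero, ← Matrix.sub_apply]
  obtain rfl | h := eq_or_ne v w
  · calc (G.lapMatrix R - M) v v = ∑ w, (G.lapMatrix R - M) v w :=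
          (Fintype.sum_eq_single v fun w hw => hoff' v w hw.symm).symm
      _ = 0 := by
        simp only [Matrix.sub_apply, Finset.sum_sub_distrib, sum_lapMatrix_apply, hsum, sub_self]
  · exact hoff' v w h

end SimpleGraph

theorem Matrix.sum_kronecker_apply {l m n p R : Type*} [Fintype m] [Fintype p]
    [NonUnitalNonAssocSemiring R]
    (A : Matrix l m R) (B : Matrix n p R) (i : l) (a : n) :
    ∑ x, (A ⊗ₖ B) (i, a) x = (∑ j, A i j) * ∑ b, B a b := by
  rw [Fintype.sum_prod_type, Finset.sum_mul_sum]
  rfl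

theorem ringClique_adj_iff {n k : ℕ} {i j : Fin n} {a b : Fin k} :
    (ringClique n k).Adj (i, a) (j, b) ↔
      (i = j ∧ a ≠ b) ∨ ((ringGraph n).Adj i j ∧ a.val = 0 ∧ b.val = 0) := by
  simp only [ringClique, ringGraph, ne_eq, Prod.mk.injEq]
  grind

theorem lapMatrix_ringClique_decomp (n k : ℕ) (hk : 2 ≤ k) :
    (ringClique n k).lapMatrix ℝ =
      (1 : Matrix (Fin n) (Fin n) ℝ) ⊗ₖ ((⊤ : SimpleGraph (Fin k)).lapMatrix ℝ) +
      (ringGraph n).lapMatrix ℝ ⊗ₖ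
        Matrix.single (⟨0, by omega⟩ : Fin k) (⟨0, by omega⟩ : Fin k) (1 : ℝ) := by
  apply SimpleGraph.lapMatrix_eq_of_sum_eq_zero
  · rintro ⟨i, a⟩
    simp only [Matrix.add_apply, Finset.sum_add_distrib, sum_kronecker_apply,
      SimpleGraph.sum_lapMatrix_apply, mul_zero, zero_mul, add_zero]
  · rintro ⟨i, a⟩ ⟨j, b⟩ hne
    simp only [Matrix.add_apply, kroneckerMap_apply, SimpleGraph.adjMatrix_apply,
      ringClique_adj_iff]
    obtain rfl | hij := eq_or_ne i j
    · have hab : a ≠ b := by simpa using hne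
      simp [hab, SimpleGraph.lapMatrix_apply_of_ne _ hab, single_apply, Fin.ext_iff]
      omega
    · rw [one_apply_ne hij, zero_mul, zero_add, SimpleGraph.lapMatrix_apply_of_ne _ hij]
      by_cases hC : (ringGraph n).Adj i j <;> by_cases h0 : a.val = 0 ∧ b.val = 0 <;>
        simp [hC, h0, hij, single_apply, Fin.ext_iff, eq_comm]
end

section
/- Let M be a real symmetric n×n matrix with eigenvalues λ_1, …, λ_n (listed with multiplicity), and let A and B be real symmetric k×k matrices. Then the set of eigenvalues of the nk×nk matrix I_n ⊗ A + M ⊗ B equals the union ∪_{i=1}^n Λ(A + λ_i B). -/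
/-!
Diagonalise `M = U D Uᵀ` with `U` orthogonal. Conjugating by `U ⊗ I` turns `I ⊗ A + M ⊗ B` into
`I ⊗ A + D ⊗ B`, which after swapping the two tensor factors is block diagonal with blocks
`A + λᵢ B`; eigenvalues are invariant under conjugation and reindexing, and those of a block
diagonal matrix are the union of those of its blocks.
-/

open Matrix Kronecker

/-- The set of (real) eigenvalues of a matrix. -/
def eigSet {N : Type*} [Fintype N] (A : Matrix N N ℝ) : Set ℝ :=
  {μ | ∃ x : N → ℝ, x ≠ 0 ∧ A.mulVec x = μ • x}

section eigSet

variable {N N' ι : Type*} [Fintype N] [Fintype N'] [Fintype ι]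

theorem eigSet_subset_eigSet_mul_mul [DecidableEq N] (X P Q : Matrix N N ℝ) (hQP : Q * P = 1) :
    eigSet X ⊆ eigSet (P * X * Q) := by
  rintro μ ⟨x, hx, hXx⟩
  refine ⟨P *ᵥ x, fun h => hx ?_, ?_⟩
  · simpa [mulVec_mulVec, hQP] using congrArg (Q *ᵥ ·) h
  · calc (P * X * Q) *ᵥ (P *ᵥ x) = P *ᵥ (X *ᵥ ((Q * P) *ᵥ x)) := by
          simp only [mulVec_mulVec, Matrix.mul_assoc]
      _ = μ • P *ᵥ x := by rw [hQP, one_mulVec, hXx, mulVec_smul]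

theorem eigSet_mul_mul [DecidableEq N] (X P Q : Matrix N N ℝ) (hPQ : P * Q = 1)
    (hQP : Q * P = 1) : eigSet (P * X * Q) = eigSet X := by
  have hX : Q * (P * X * Q) * P = X := by
    simp only [← Matrix.mul_assoc, hQP, Matrix.one_mul]
    rw [Matrix.mul_assoc, hQP, Matrix.mul_one]
  refine (eigSet_subset_eigSet_mul_mul X P Q hQP).antisymm' ?_
  simpa only [hX] using eigSet_subset_eigSet_mul_mul (P * X * Q) Q P hPQ

theorem eigSet_subset_eigSet_reindex (e : N ≃ N') (X : Matrix N N ℝ) :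
    eigSet X ⊆ eigSet (reindex e e X) := by
  rintro μ ⟨x, hx, hXx⟩
  refine ⟨x ∘ e.symm, fun h => hx (funext fun a => by simpa using congrFun h (e a)), ?_⟩
  rw [reindex_apply, submatrix_mulVec_equiv]
  simp [Function.comp_assoc, hXx, Pi.smul_comp]

theorem eigSet_reindex (e : N ≃ N') (X : Matrix N N ℝ) : eigSet (reindex e e X) = eigSet X := by
  refine (eigSet_subset_eigSet_reindex e X).antisymm' ?_
  simpa using eigSet_subset_eigSet_reindex e.symm (reindex e e X)

theorem blockDiagonal_mulVec_apply [DecidableEq ι] (F : ι → Matrix N N ℝ) (z : N × ι → ℝ)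
    (j : N) (i : ι) : (blockDiagonal F *ᵥ z) (j, i) = (F i *ᵥ fun j' => z (j', i)) j := by
  simp [mulVec, dotProduct, blockDiagonal_apply, Fintype.sum_prod_type]

theorem eigSet_blockDiagonal [DecidableEq ι] (F : ι → Matrix N N ℝ) :
    eigSet (blockDiagonal F) = ⋃ i, eigSet (F i) := by
  ext μ
  simp only [Set.mem_iUnion]
  constructor
  · rintro ⟨z, hz, hFz⟩
    obtain ⟨⟨j, i⟩, hji⟩ := Function.ne_iff.mp hz
    refine ⟨i, fun j' => z (j', i), Function.ne_iff.mpr ⟨j, hji⟩, funext fun j' => ?_⟩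
    simpa [blockDiagonal_mulVec_apply] using congrFun hFz (j', i)
  · rintro ⟨i, x, hx, hFx⟩
    refine ⟨fun p => if p.2 = i then x p.1 else 0, ?_, ?_⟩
    · obtain ⟨j, hj⟩ := Function.ne_iff.mp hx
      exact Function.ne_iff.mpr ⟨(j, i), by simpa using hj⟩
    · ext ⟨j, i'⟩
      rw [blockDiagonal_mulVec_apply]
      by_cases h : i' = i
      · subst h; simpa using congrFun hFx j
      · simp only [h, if_false, Pi.smul_apply, smul_zero]
        exact congrFun (mulVec_zero (F i')) j

end eigSet

section kronecker

variable {ι N : Type*} [DecidableEq ι]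

theorem one_kronecker_add_diagonal_kronecker (d : ι → ℝ) (A B : Matrix N N ℝ) :
    (1 : Matrix ι ι ℝ) ⊗ₖ A + diagonal d ⊗ₖ B =
      reindex (Equiv.prodComm _ _) (Equiv.prodComm _ _) (blockDiagonal fun i => A + d i • B) := by
  ext ⟨i, a⟩ ⟨j, b⟩
  by_cases h : i = j <;> simp [blockDiagonal_apply, one_apply, h]

theorem one_kronecker_add_mul_mul_kronecker [Fintype ι] [Fintype N] [DecidableEq N]
    (P D Q : Matrix ι ι ℝ) (hPQ : P * Q = 1) (A B : Matrix N N ℝ) :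
    (1 : Matrix ι ι ℝ) ⊗ₖ A + (P * D * Q) ⊗ₖ B =
      (P ⊗ₖ 1) * ((1 : Matrix ι ι ℝ) ⊗ₖ A + D ⊗ₖ B) * (Q ⊗ₖ 1) := by
  simp only [Matrix.mul_add, Matrix.add_mul, ← mul_kronecker_mul, Matrix.mul_one, Matrix.one_mul,
    hPQ]

end kronecker

theorem eigSet_kronecker_sum_general {n k : ℕ} (M : Matrix (Fin n) (Fin n) ℝ)
    (hM : M.IsHermitian) (A B : Matrix (Fin k) (Fin k) ℝ) :
    eigSet ((1 : Matrix (Fin n) (Fin n) ℝ) ⊗ₖ A + M ⊗ₖ B) =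
      ⋃ i : Fin n, eigSet (A + hM.eigenvalues i • B) := by
  set U : Matrix (Fin n) (Fin n) ℝ := ↑hM.eigenvectorUnitary
  have hUU : U * star U = 1 := Unitary.coe_mul_star_self _
  have hUU' : star U * U = 1 := Unitary.coe_star_mul_self _
  have hM_diag : M = U * diagonal hM.eigenvalues * star U := by
    simpa using hM.spectral_theorem
  conv_lhs => rw [hM_diag]
  rw [one_kronecker_add_mul_mul_kronecker _ _ _ hUU, eigSet_mul_mul,
    one_kronecker_add_diagonal_kronecker, eigSet_reindex, eigSet_blockDiagonal]
  · simp [← mul_kronecker_mul, hUU]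
  · simp [← mul_kronecker_mul, hUU']

theorem eigSet_kronecker_sum {n k : ℕ} (M : Matrix (Fin n) (Fin n) ℝ)
    (hM : M.IsHermitian) (A B : Matrix (Fin k) (Fin k) ℝ)
    (hA : A.IsHermitian) (hB : B.IsHermitian) :
    eigSet ((1 : Matrix (Fin n) (Fin n) ℝ) ⊗ₖ A + M ⊗ₖ B) =
      ⋃ i : Fin n, eigSet (A + hM.eigenvalues i • B) :=
  eigSet_kronecker_sum_general M hM A B
end

section
/- For every integer k ≥ 2, the multiset of eigenvalues of the Laplacian L(G_cr(k)) of the crown graph (a (k+2)×(k+2) matrix) consists of 0, k+2, the value 1 with multiplicity 2, and the value k with multiplicity k−2. Equivalently, det(L(G_cr(k)) − xI_{k+2}) = (−1)^k · x · (x − (k+2)) · (x − 1)² · (x − k)^{k−2} for all real x. -/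
/-!
Let `𝟙₀`, `𝟙_K`, `𝟙_P` be the indicators of the hub `v₁`, of the clique and of the two pendant
vertices, and `D` the diagonal matrix with `k` on the clique and `1` on the pendants. Then
`L - D = 2 𝟙₀𝟙₀ᵀ - 𝟙_K𝟙_Kᵀ - 𝟙₀𝟙_Pᵀ - 𝟙_P𝟙₀ᵀ = W S Wᵀ` with `W = [𝟙₀ 𝟙_K 𝟙_P]` and `S` a fixed
`3 × 3` matrix. For `x ∉ {1, k}` the matrix determinant lemma turns `det (x - L)` into
`det (x - D)` times a `3 × 3` determinant involving only the Gram matrix `Wᵀ (x - D)⁻¹ W`, whose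
entries are read off from the sizes of the three vertex classes. Two polynomials agreeing at
infinitely many points are equal, which gives the characteristic polynomial.
-/

open Matrix Polynomial

/-- The crown graph `G_cr(k)` on `k + 2` vertices: the vertices `0, …, k-1` form a
clique, and each of the two extra vertices `k`, `k+1` is adjacent to vertex `0` only. -/
def crownGraph (k : ℕ) : SimpleGraph (Fin (k + 2)) where
  Adj v w := v ≠ w ∧
    ((v.val < k ∧ w.val < k) ∨ (k ≤ v.val ∧ w.val = 0) ∨ (k ≤ w.val ∧ v.val = 0))
  symm := ⟨by
    rintro v w ⟨hne, h⟩
    exact ⟨fun h' => hne h'.symm, by tauto⟩⟩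
  loopless := ⟨fun v h => h.1 rfl⟩

instance (k : ℕ) : DecidableRel (crownGraph k).Adj := fun v w =>
  decidable_of_iff (v ≠ w ∧
    ((v.val < k ∧ w.val < k) ∨ (k ≤ v.val ∧ w.val = 0) ∨ (k ≤ w.val ∧ v.val = 0))) Iff.rfl

open Finset

namespace crownGraph

variable {k : ℕ}

lemma adj_iff {v w : Fin (k + 2)} : (crownGraph k).Adj v w ↔ v ≠ w ∧
    ((v.val < k ∧ w.val < k) ∨ (k ≤ v.val ∧ w.val = 0) ∨ (k ≤ w.val ∧ v.val = 0)) :=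
  Iff.rfl

lemma degree_eq (hk : 0 < k) (v : Fin (k + 2)) :
    (crownGraph k).degree v = if v.val = 0 then k + 1 else if v.val < k then k - 1 else 1 := by
  rw [← SimpleGraph.card_neighborFinset_eq_degree, SimpleGraph.neighborFinset_eq_filter]
  split_ifs with hhub hclique
  · rw [show univ.filter ((crownGraph k).Adj v) = univ.erase v by
      ext w
      simp only [mem_filter, mem_univ, true_and, mem_erase, and_true, adj_iff, ne_eq, Fin.ext_iff]
      have := w.isLt
      omega]
    simp
  · rw [show univ.filter ((crownGraph k).Adj v) = (Iio ⟨k, by omega⟩).erase v by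
      ext w
      simp only [mem_filter, mem_univ, true_and, mem_erase, mem_Iio, adj_iff, ne_eq,
        Fin.ext_iff, Fin.lt_def]
      omega]
    rw [card_erase_of_mem (by simpa [Fin.lt_def] using hclique), Fin.card_Iio]
  · rw [show univ.filter ((crownGraph k).Adj v) = {0} by
      ext w
      simp only [mem_filter, mem_univ, true_and, mem_singleton, adj_iff, ne_eq,
        Fin.ext_iff, Fin.val_zero]
      omega]
    rfl

def indicators (k : ℕ) : Matrix (Fin (k + 2)) (Fin 3) ℝ :=
  of fun v => ![if v.val = 0 then 1 else 0, if v.val < k then 1 else 0,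
    if k ≤ v.val then 1 else 0]

def lapCore : Matrix (Fin 3) (Fin 3) ℝ := !![2, 0, -1; 0, -1, 0; -1, 0, 0]

def cliqueWeight (k : ℕ) (a b : ℝ) : Fin (k + 2) → ℝ := fun v => if v.val < k then a else b

lemma lapMatrix_eq_diagonal_add (hk : 0 < k) :
    (crownGraph k).lapMatrix ℝ =
      diagonal (cliqueWeight k k 1) + indicators k * lapCore * (indicators k)ᵀ := by
  ext v w
  have hv := v.isLt
  have hw := w.isLt
  simp only [SimpleGraph.lapMatrix, SimpleGraph.degMatrix, SimpleGraph.adjMatrix_apply,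
    degree_eq hk, Matrix.sub_apply, Matrix.add_apply, diagonal_apply, Matrix.mul_apply,
    Fin.sum_univ_three, indicators, lapCore, cliqueWeight, transpose_apply, of_apply, adj_iff,
    ne_eq, Fin.ext_iff, Nat.cast_ite, Nat.cast_add, Nat.cast_one, Nat.cast_pred hk,
    cons_val_zero, cons_val_one, cons_val_two, head_cons, tail_cons]
  split_ifs <;> first | omega | ring

lemma transpose_indicators_mul_diagonal_mul_indicators (hk : 0 < k) (a b : ℝ) :
    (indicators k)ᵀ * diagonal (cliqueWeight k a b) * indicators k =
      !![a, a, 0; a, k * a, 0; 0, 0, 2 * b] := by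
  have not_le_of_fin (x : Fin k) : ¬ k ≤ x.val := not_le.mpr x.isLt
  have sum_hub (f : Fin k → ℝ) : ∑ x : Fin k, (if x.val = 0 then f x else 0) = f ⟨0, hk⟩ := by
    rw [sum_eq_single ⟨0, hk⟩ (fun x _ hx => if_neg (hx ∘ Fin.ext)) (by simp)]
    rfl
  ext i j
  fin_cases i <;> fin_cases j <;>
    simp [indicators, cliqueWeight, Matrix.mul_apply, Fin.sum_univ_add, diagonal_apply, hk.ne',
      not_le_of_fin, sum_hub, -Fin.val_eq_zero_iff]

lemma det_diagonal_cliqueWeight (a b : ℝ) :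
    (diagonal (cliqueWeight k a b)).det = a ^ k * b ^ 2 := by
  simp [det_diagonal, Fin.prod_univ_add, cliqueWeight]

lemma inv_diagonal_cliqueWeight {a b : ℝ} (ha : a ≠ 0) (hb : b ≠ 0) :
    (diagonal (cliqueWeight k a b))⁻¹ = diagonal (cliqueWeight k a⁻¹ b⁻¹) := by
  refine inv_eq_left_inv ?_
  rw [diagonal_mul_diagonal, ← diagonal_one]
  congr 1
  ext v
  unfold cliqueWeight
  split_ifs <;> field_simp

lemma scalar_sub_lapMatrix (hk : 0 < k) (x : ℝ) :
    scalar _ x - (crownGraph k).lapMatrix ℝ =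
      diagonal (cliqueWeight k (x - k) (x - 1)) + indicators k * (-lapCore * (indicators k)ᵀ) := by
  have cliqueWeight_sub : cliqueWeight k (x - k) (x - 1) = fun v => x - cliqueWeight k k 1 v := by
    ext v
    unfold cliqueWeight
    split_ifs <;> rfl
  rw [lapMatrix_eq_diagonal_add hk, scalar_apply, cliqueWeight_sub, ← diagonal_sub, Matrix.neg_mul,
    Matrix.mul_neg, Matrix.mul_assoc, sub_add_eq_sub_sub, sub_eq_add_neg]

lemma det_one_add_neg_lapCore_mul (a b c : ℝ) :
    (1 + -lapCore * !![a, a, 0; a, c * a, 0; 0, 0, 2 * b]).det =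
      (1 - 2 * a) * (1 + c * a) + 2 * a ^ 2 + 2 * b * (a ^ 2 - a * (1 + c * a)) := by
  simp [lapCore, one_fin_three, det_fin_three]
  ring

lemma eval_charpoly_lapMatrix (hk : 2 ≤ k) {x : ℝ} (hx₁ : x ≠ 1) (hxk : x ≠ k) :
    ((crownGraph k).lapMatrix ℝ).charpoly.eval x =
      x * (x - (k + 2)) * (x - 1) ^ 2 * (x - k) ^ (k - 2) := by
  have ha : x - k ≠ 0 := sub_ne_zero.mpr hxk
  have hb : x - 1 ≠ 0 := sub_ne_zero.mpr hx₁
  have hunit : IsUnit (diagonal (cliqueWeight k (x - k) (x - 1))).det := by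
    rw [det_diagonal_cliqueWeight]
    exact (mul_ne_zero (pow_ne_zero _ ha) (pow_ne_zero _ hb)).isUnit
  rw [eval_charpoly, scalar_sub_lapMatrix (by omega), det_add_mul _ _ hunit,
    det_diagonal_cliqueWeight, inv_diagonal_cliqueWeight ha hb, Matrix.mul_assoc,
    Matrix.mul_assoc, ← Matrix.mul_assoc (indicators k)ᵀ,
    transpose_indicators_mul_diagonal_mul_indicators (by omega), det_one_add_neg_lapCore_mul,
    show (x - k) ^ k = (x - k) ^ (k - 2) * (x - k) ^ 2 by rw [← pow_add, Nat.sub_add_cancel hk]]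
  field_simp
  ring

end crownGraph

theorem eigenvalues_crownGraph (k : ℕ) (hk : 2 ≤ k) :
    Matrix.charpoly ((crownGraph k).lapMatrix ℝ) =
      X * (X - C ((k : ℝ) + 2)) * (X - C 1) ^ 2 * (X - C (k : ℝ)) ^ (k - 2) ∧
    ∀ x : ℝ, ((crownGraph k).lapMatrix ℝ - x • (1 : Matrix (Fin (k + 2)) (Fin (k + 2)) ℝ)).det =
      (-1 : ℝ) ^ k * x * (x - ((k : ℝ) + 2)) * (x - 1) ^ 2 * (x - (k : ℝ)) ^ (k - 2) := by
  have hchar : ((crownGraph k).lapMatrix ℝ).charpoly =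
      X * (X - C ((k : ℝ) + 2)) * (X - C 1) ^ 2 * (X - C (k : ℝ)) ^ (k - 2) := by
    refine eq_of_infinite_eval_eq _ _ ((Set.toFinite {1, (k : ℝ)}).infinite_compl.mono ?_)
    intro x hx
    simp only [Set.mem_compl_iff, Set.mem_insert_iff, Set.mem_singleton_iff, not_or] at hx
    simp [crownGraph.eval_charpoly_lapMatrix hk hx.1 hx.2]
  refine ⟨hchar, fun x => ?_⟩
  have hdet := congrArg (eval x) hchar
  rw [eval_charpoly, scalar_apply, ← smul_one_eq_diagonal] at hdet
  rw [← neg_sub, det_neg, hdet, Fintype.card_fin]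
  simp only [eval_mul, eval_X, eval_sub, eval_C, eval_pow]
  ring
end

section
/- For every integer k ≥ 2, the Laplacian of the crown graph satisfies λ_max(L(G_cr(k))) = k + 2 and λ_min^+(L(G_cr(k))) = 1; hence its condition number is χ(L(G_cr(k))) = k + 2. -/
open Matrix

/-- The largest eigenvalue of a matrix. -/
noncomputable def lamMax {N : Type*} [Fintype N] (A : Matrix N N ℝ) : ℝ :=
  sSup (eigSet A)

/-- The smallest positive eigenvalue of a matrix. -/
noncomputable def lamMinPos {N : Type*} [Fintype N] (A : Matrix N N ℝ) : ℝ :=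
  sInf {μ ∈ eigSet A | 0 < μ}

/-- The condition number `χ(A) = λ_max(A) / λ_min^+(A)`. -/
noncomputable def chi {N : Type*} [Fintype N] (A : Matrix N N ℝ) : ℝ :=
  lamMax A / lamMinPos A

/-
Vertex `0` is adjacent to every other vertex, so `(k + 2) • e₀ - 𝟙` is a Laplacian eigenvector
for `k + 2`; the two pendant vertices have the same neighbourhood, so the difference of their
indicator vectors is an eigenvector for `1`. Conversely, the columns of the Laplacian sum to zero,
so an eigenvector `x` for `μ ≠ 0` has `∑ x = 0`. The eigen-equations at vertex `0`, at the pendant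
vertices and at the remaining clique vertices then force `x` to vanish there in turn unless
`μ = k + 2`, `μ = 1` or `μ = k`. Hence the spectrum lies in `{0, 1, k, k + 2}` and contains `1`
and `k + 2`.
-/

open Finset

namespace SimpleGraph

variable {V R : Type*} [Fintype V] [DecidableEq V] (G : SimpleGraph V) [DecidableRel G.Adj]

theorem sum_lapMatrix_mulVec [CommRing R] (x : V → R) : ∑ i, (G.lapMatrix R *ᵥ x) i = 0 := by
  rw [← one_dotProduct, dotProduct_mulVec, ← mulVec_transpose, (G.isSymm_lapMatrix R).eq]
  exact (congrArg (· ⬝ᵥ x) (G.lapMatrix_mulVec_const_eq_zero (R := R))).trans (zero_dotProduct x)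

theorem sum_eq_zero_of_lapMatrix_mulVec_eq_smul [CommRing R] [NoZeroDivisors R] {μ : R}
    (hμ : μ ≠ 0) {x : V → R} (hx : G.lapMatrix R *ᵥ x = μ • x) : ∑ i, x i = 0 := by
  have h := G.sum_lapMatrix_mulVec x
  simp only [hx, Pi.smul_apply, smul_eq_mul, ← Finset.mul_sum] at h
  exact (mul_eq_zero.1 h).resolve_left hμ

theorem lapMatrix_mulVec_apply_of_neighborFinset_eq_erase [CommRing R] {v : V} {s : Finset V}
    (hv : v ∈ s) (hs : G.neighborFinset v = s.erase v) (x : V → R) :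
    (G.lapMatrix R *ᵥ x) v = #s * x v - ∑ u ∈ s, x u := by
  rw [lapMatrix_mulVec_apply, ← card_neighborFinset_eq_degree, hs, card_erase_of_mem hv,
    sum_erase_eq_sub hv, Nat.cast_pred (card_pos.2 ⟨v, hv⟩)]
  ring

theorem lapMatrix_apply [Ring R] (i j : V) :
    G.lapMatrix R i j = (if i = j then (G.degree i : R) else 0) - if G.Adj i j then 1 else 0 := by
  simp [lapMatrix, degMatrix, Matrix.sub_apply, diagonal_apply, adjMatrix_apply]

theorem IsUniversal.lapMatrix_mulVec_single [Ring R] {v : V} (hv : G.IsUniversal v) :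
    G.lapMatrix R *ᵥ Pi.single v 1 = (Fintype.card V : R) • Pi.single v 1 - fun _ => 1 := by
  ext i
  simp only [mulVec_single_one, col_apply, lapMatrix_apply, Pi.sub_apply, Pi.smul_apply,
    smul_eq_mul]
  rcases eq_or_ne i v with rfl | hi
  · rw [(G.degree_eq_card_sub_one i).2 hv, Nat.cast_sub (Fintype.card_pos_iff.2 ⟨i⟩)]
    simp
  · simp [hi, (hv hi.symm).symm]

theorem IsUniversal.card_mem_eigSet_lapMatrix [Nontrivial V] {v : V} (hv : G.IsUniversal v) :
    (Fintype.card V : ℝ) ∈ eigSet (G.lapMatrix ℝ) := by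
  obtain ⟨w, hw⟩ := exists_ne v
  refine ⟨(Fintype.card V : ℝ) • Pi.single v 1 - fun _ => 1, fun h => ?_, ?_⟩
  · simpa [hw] using congrFun h w
  · rw [mulVec_sub, mulVec_smul, hv.lapMatrix_mulVec_single, G.lapMatrix_mulVec_const_eq_zero,
      sub_zero]

theorem degree_mem_eigSet_lapMatrix_of_neighborFinset_eq {u w : V} (huw : u ≠ w)
    (h : G.neighborFinset u = G.neighborFinset w) :
    (G.degree u : ℝ) ∈ eigSet (G.lapMatrix ℝ) := by
  have hdeg : G.degree w = G.degree u := by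
    rw [← card_neighborFinset_eq_degree, ← card_neighborFinset_eq_degree, h]
  have hadj : ∀ i, G.Adj i u ↔ G.Adj i w := fun i => by
    rw [G.adj_comm i u, G.adj_comm i w, ← mem_neighborFinset, h, mem_neighborFinset]
  refine ⟨Pi.single u 1 - Pi.single w 1, fun h => ?_, ?_⟩
  · simpa [huw] using congrFun h u
  ext i
  simp only [mulVec_sub, mulVec_single_one, col_apply, lapMatrix_apply, Pi.sub_apply,
    Pi.smul_apply, smul_eq_mul, hadj i]
  rw [sub_sub_sub_cancel_right]
  rcases eq_or_ne i u with rfl | hiu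
  · simp [huw]
  rcases eq_or_ne i w with rfl | hiw
  · simp [hiu, hdeg]
  · simp [hiu, hiw]

end SimpleGraph

namespace crownGraph

variable {k : ℕ}

theorem isUniversal_zero (hk : 0 < k) : (crownGraph k).IsUniversal 0 := by
  intro w hw
  have hw' : w.val ≠ 0 := fun h => hw (Fin.ext h).symm
  exact ⟨hw, by simp only [Fin.val_zero, and_true]; omega⟩

theorem neighborFinset_zero (hk : 0 < k) : (crownGraph k).neighborFinset 0 = univ.erase 0 := by
  ext w
  rw [SimpleGraph.mem_neighborFinset, mem_erase, and_iff_left (mem_univ w)]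
  exact ⟨fun h => h.ne.symm, fun hw => isUniversal_zero hk hw.symm⟩

theorem neighborFinset_of_lt {v : Fin (k + 2)} (hv : v.val < k) (hv0 : v ≠ 0) :
    (crownGraph k).neighborFinset v = ({j | j.val < k} : Finset _).erase v := by
  have hv0' : v.val ≠ 0 := fun h => hv0 (Fin.ext h)
  ext u
  simp only [SimpleGraph.mem_neighborFinset, mem_erase, mem_filter_univ]
  simp only [crownGraph, ne_eq, Fin.ext_iff]
  omega

theorem neighborFinset_of_le (hk : 0 < k) {v : Fin (k + 2)} (hv : k ≤ v.val) :
    (crownGraph k).neighborFinset v = {0} := by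
  ext u
  simp only [SimpleGraph.mem_neighborFinset, mem_singleton]
  simp only [crownGraph, ne_eq, Fin.ext_iff, Fin.val_zero]
  omega

variable {R : Type*} [CommRing R]

theorem lapMatrix_mulVec_apply_zero (hk : 0 < k) (x : Fin (k + 2) → R) :
    ((crownGraph k).lapMatrix R *ᵥ x) 0 = (k + 2) * x 0 - ∑ j, x j := by
  rw [SimpleGraph.lapMatrix_mulVec_apply_of_neighborFinset_eq_erase _ (mem_univ 0)
    (neighborFinset_zero hk), card_univ, Fintype.card_fin]
  push_cast
  rfl

theorem lapMatrix_mulVec_apply_of_lt {v : Fin (k + 2)} (hv : v.val < k) (hv0 : v ≠ 0)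
    (x : Fin (k + 2) → R) :
    ((crownGraph k).lapMatrix R *ᵥ x) v = k * x v - ∑ j with j.val < k, x j := by
  rw [SimpleGraph.lapMatrix_mulVec_apply_of_neighborFinset_eq_erase _ (by simpa using hv)
    (neighborFinset_of_lt hv hv0), Fin.card_filter_val_lt, min_eq_right (by omega)]

theorem lapMatrix_mulVec_apply_of_le (hk : 0 < k) {v : Fin (k + 2)} (hv : k ≤ v.val)
    (x : Fin (k + 2) → R) :
    ((crownGraph k).lapMatrix R *ᵥ x) v = x v - x 0 := by
  rw [SimpleGraph.lapMatrix_mulVec_apply, ← SimpleGraph.card_neighborFinset_eq_degree,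
    neighborFinset_of_le hk hv, card_singleton, sum_singleton, Nat.cast_one, one_mul]

theorem eigSet_lapMatrix_subset (hk : 0 < k) :
    eigSet ((crownGraph k).lapMatrix ℝ) ⊆ {0, 1, (k : ℝ), (k : ℝ) + 2} := by
  rintro μ ⟨x, hx_ne, hx⟩
  by_contra hμ
  simp only [Set.mem_insert_iff, Set.mem_singleton_iff, not_or] at hμ
  obtain ⟨hμ0, hμ1, hμk, hμk2⟩ := hμ
  have heig (v : Fin (k + 2)) : ((crownGraph k).lapMatrix ℝ *ᵥ x) v = μ * x v := by
    rw [hx]; rfl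
  have hsum : ∑ v, x v = 0 := SimpleGraph.sum_eq_zero_of_lapMatrix_mulVec_eq_smul _ hμ0 hx
  have hzero : x 0 = 0 := by
    have h : ((k : ℝ) + 2) * x 0 = μ * x 0 := by
      rw [← heig, lapMatrix_mulVec_apply_zero hk, hsum, sub_zero]
    exact (mul_eq_mul_right_iff.1 h).resolve_left (Ne.symm hμk2)
  have hpendant (v : Fin (k + 2)) (hv : k ≤ v.val) : x v = 0 := by
    have h : 1 * x v = μ * x v := by
      rw [← heig, lapMatrix_mulVec_apply_of_le hk hv, hzero, sub_zero, one_mul]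
    exact (mul_eq_mul_right_iff.1 h).resolve_left (Ne.symm hμ1)
  have hclique : ∑ j with j.val < k, x j = 0 := by
    have h := sum_filter_add_sum_filter_not univ (fun j : Fin (k + 2) => j.val < k) x
    have hrest : ∑ j with ¬j.val < k, x j = 0 :=
      sum_eq_zero fun j hj => hpendant j (by simpa using hj)
    rwa [hrest, add_zero, hsum] at h
  refine hx_ne (funext fun v => ?_)
  rcases eq_or_ne v 0 with rfl | hv0
  · exact hzero
  rcases lt_or_ge v.val k with hv | hv
  · have h : (k : ℝ) * x v = μ * x v := by
      rw [← heig, lapMatrix_mulVec_apply_of_lt hv hv0, hclique, sub_zero]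
    exact (mul_eq_mul_right_iff.1 h).resolve_left (Ne.symm hμk)
  · exact hpendant v hv

theorem add_two_mem_eigSet_lapMatrix (hk : 0 < k) :
    (k : ℝ) + 2 ∈ eigSet ((crownGraph k).lapMatrix ℝ) := by
  simpa using (isUniversal_zero hk).card_mem_eigSet_lapMatrix

theorem one_mem_eigSet_lapMatrix (hk : 0 < k) : (1 : ℝ) ∈ eigSet ((crownGraph k).lapMatrix ℝ) := by
  have hp : k ≤ (Fin.last k).castSucc.val := by simp
  have hq : k ≤ (Fin.last (k + 1)).val := by simp
  have h := (crownGraph k).degree_mem_eigSet_lapMatrix_of_neighborFinset_eq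
    (Fin.castSucc_lt_last _).ne
    (by rw [neighborFinset_of_le hk hp, neighborFinset_of_le hk hq])
  rwa [← SimpleGraph.card_neighborFinset_eq_degree, neighborFinset_of_le hk hp, card_singleton,
    Nat.cast_one] at h

end crownGraph

theorem chi_crownGraph (k : ℕ) (hk : 2 ≤ k) :
    lamMax ((crownGraph k).lapMatrix ℝ) = (k : ℝ) + 2 ∧
    lamMinPos ((crownGraph k).lapMatrix ℝ) = 1 ∧
    chi ((crownGraph k).lapMatrix ℝ) = (k : ℝ) + 2 := by
  have hk0 : 0 < k := by omega
  have hk1 : (1 : ℝ) ≤ k := by exact_mod_cast hk0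
  have hmax : lamMax ((crownGraph k).lapMatrix ℝ) = (k : ℝ) + 2 := by
    refine IsGreatest.csSup_eq ⟨crownGraph.add_two_mem_eigSet_lapMatrix hk0, fun μ hμ => ?_⟩
    rcases crownGraph.eigSet_lapMatrix_subset hk0 hμ with rfl | rfl | rfl | rfl <;> linarith
  have hmin : lamMinPos ((crownGraph k).lapMatrix ℝ) = 1 := by
    refine IsLeast.csInf_eq ⟨⟨crownGraph.one_mem_eigSet_lapMatrix hk0, one_pos⟩, ?_⟩
    rintro μ ⟨hμ, hμ_pos⟩
    rcases crownGraph.eigSet_lapMatrix_subset hk0 hμ with rfl | rfl | rfl | rfl <;> linarith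
  exact ⟨hmax, hmin, by rw [chi, hmax, hmin, div_one]⟩
end

section
/- There exist constants 0 < c₁ ≤ c₂ such that for all integers n ≥ 3 and k ≥ 2, the condition number of the Laplacian of the ring-of-cliques graph satisfies c₁ n²k² ≤ χ(L(G_RC(n,k))) ≤ c₂ n²k², i.e. χ(L(G_RC(n,k))) = Θ(n²k²). -/
open Matrix

/-!
The largest eigenvalue of `L = L(G_RC(n,k))` is of order `k`: by Gershgorin it is at most twice
the maximal degree, and since the trace of `L` is the sum of its eigenvalues, it is at least the
minimal degree `k - 1`.

The smallest positive eigenvalue is of order `1 / (k n²)`. For the lower bound, a vector `x`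
with `∑ x = 0` satisfies the Poincaré inequality `‖x‖² ≤ 4 k n² ⟪x, L x⟫`: compare every
`x (i, a)` with `x (0, 0)` through the spoke `(i, a) — (i, 0)` of its clique and the ring path
`(0, 0) — ⋯ — (i, 0)`, of length `< n`. For the upper bound, the test vector which takes on the
`i`-th clique the value `min (i, n - i)` (minus its mean) has ring energy at most `n`, no clique
energy, and squared norm `≳ k n³`.
-/

theorem dotProduct_self_le_sum_sub_sq {ι : Type*} [Fintype ι] {x : ι → ℝ} (hx : ∑ i, x i = 0)
    (c : ℝ) : x ⬝ᵥ x ≤ ∑ i, (x i - c) ^ 2 := by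
  have : ∑ i, (x i - c) ^ 2 = x ⬝ᵥ x - 2 * c * ∑ i, x i + Fintype.card ι * c ^ 2 := by
    rw [dotProduct, Finset.mul_sum, ← nsmul_eq_mul, ← Finset.card_univ, ← Finset.sum_const,
      ← Finset.sum_sub_distrib, ← Finset.sum_add_distrib]
    exact Finset.sum_congr rfl fun i _ => by ring
  rw [this, hx, mul_zero, sub_zero, le_add_iff_nonneg_right]
  positivity

theorem sq_sub_le_mul_sum_sq_sub (f : ℕ → ℝ) (m : ℕ) :
    (f m - f 0) ^ 2 ≤ m * ∑ t ∈ Finset.range m, (f (t + 1) - f t) ^ 2 := by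
  rw [← Finset.sum_range_sub]
  simpa using sq_sum_le_card_mul_sum_sq (s := Finset.range m) (f := fun t => f (t + 1) - f t)

theorem sum_range_sub_sq_eq (T : ℕ) (m : ℝ) :
    ∑ t ∈ Finset.range T, ((t : ℝ) - m) ^ 2 = T * (T ^ 2 - 1) / 12 + T * ((T - 1) / 2 - m) ^ 2 := by
  induction T with
  | zero => simp
  | succ T ih => rw [Finset.sum_range_succ, ih]; push_cast; ring

namespace Matrix

variable {N : Type*} [Fintype N] [DecidableEq N] {A : Matrix N N ℝ}

namespace IsHermitian

theorem eigenvalues_mem_eigSet (hA : A.IsHermitian) (i : N) : hA.eigenvalues i ∈ eigSet A :=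
  ⟨_, fun h => hA.eigenvectorBasis.orthonormal.ne_zero i (by ext j; exact congrFun h j),
    hA.mulVec_eigenvectorBasis i⟩

theorem dotProduct_mulVec_eq_sum (hA : A.IsHermitian) (y : N → ℝ) :
    y ⬝ᵥ (A *ᵥ y) = ∑ i, hA.eigenvalues i * (⇑(hA.eigenvectorBasis i) ⬝ᵥ y) ^ 2 := by
  have hcoord : ∀ i, ((hA.eigenvectorUnitary : Matrix N N ℝ)ᵀ *ᵥ y) i =
      ⇑(hA.eigenvectorBasis i) ⬝ᵥ y := fun _ => rfl
  conv_lhs => rw [hA.spectral_theorem]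
  rw [Unitary.conjStarAlgAut_apply, star_eq_conjTranspose, conjTranspose_eq_transpose_of_trivial,
    ← mulVec_mulVec, ← mulVec_mulVec, dotProduct_mulVec, ← mulVec_transpose, dotProduct]
  refine Finset.sum_congr rfl fun i _ => ?_
  rw [mulVec_diagonal, hcoord, Function.comp_apply, RCLike.ofReal_real_eq_id, id]
  ring

theorem dotProduct_self_eq_sum (hA : A.IsHermitian) (y : N → ℝ) :
    y ⬝ᵥ y = ∑ i, (⇑(hA.eigenvectorBasis i) ⬝ᵥ y) ^ 2 := by
  set U : Matrix N N ℝ := ↑hA.eigenvectorUnitary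
  have hU : U * Uᵀ = 1 := by
    rw [← conjTranspose_eq_transpose_of_trivial, ← star_eq_conjTranspose]
    exact Unitary.coe_mul_star_self _
  calc y ⬝ᵥ y = y ⬝ᵥ ((U * Uᵀ) *ᵥ y) := by rw [hU, one_mulVec]
    _ = (Uᵀ *ᵥ y) ⬝ᵥ (Uᵀ *ᵥ y) := by
      rw [← mulVec_mulVec, dotProduct_mulVec, ← mulVec_transpose]
    _ = _ := Finset.sum_congr rfl fun i _ => (sq _).symm

theorem exists_le_mem_eigSet_of_le_diag [Nonempty N] (hA : A.IsHermitian) {d : ℝ}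
    (hd : ∀ i, d ≤ A i i) : ∃ μ ∈ eigSet A, d ≤ μ := by
  have htrace : A.trace = ∑ i, hA.eigenvalues i := by
    simpa using hA.trace_eq_sum_eigenvalues
  obtain ⟨i, -, hi⟩ := Finset.exists_le_of_sum_le Finset.univ_nonempty
    (show ∑ _i, d ≤ ∑ i, hA.eigenvalues i from htrace ▸ Finset.sum_le_sum fun i _ => hd i)
  exact ⟨_, hA.eigenvalues_mem_eigSet i, hi⟩

end IsHermitian

theorem PosSemidef.exists_pos_mem_eigSet_mul_le (hA : A.PosSemidef) {y : N → ℝ} (hy : y ≠ 0)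
    (hker : ∀ v, A *ᵥ v = 0 → v ⬝ᵥ y = 0) :
    ∃ μ ∈ eigSet A, 0 < μ ∧ μ * (y ⬝ᵥ y) ≤ y ⬝ᵥ (A *ᵥ y) := by
  set hH := hA.isHermitian
  set c : N → ℝ := fun i => ⇑(hH.eigenvectorBasis i) ⬝ᵥ y
  have hker' : ∀ i, hH.eigenvalues i = 0 → c i = 0 := fun i hi =>
    hker _ (by rw [hH.mulVec_eigenvectorBasis, hi, zero_smul])
  obtain ⟨i₀, hi₀⟩ : ∃ i, c i ≠ 0 := by
    by_contra! hc
    apply hy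
    rw [← dotProduct_self_eq_zero, hH.dotProduct_self_eq_sum]
    simp [c, hc]
  -- the smallest eigenvalue along which `y` has a nonzero component
  obtain ⟨i, hi, hmin⟩ := Finset.exists_min_image (Finset.univ.filter (c · ≠ 0)) hH.eigenvalues
    ⟨i₀, by simpa using hi₀⟩
  rw [Finset.mem_filter] at hi
  refine ⟨_, hH.eigenvalues_mem_eigSet i,
    (hA.eigenvalues_nonneg i).lt_of_ne fun h => hi.2 (hker' i h.symm), ?_⟩
  rw [hH.dotProduct_self_eq_sum, hH.dotProduct_mulVec_eq_sum, Finset.mul_sum]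
  refine Finset.sum_le_sum fun j _ => ?_
  by_cases hj : c j = 0
  · simp only [c] at hj
    simp [hj]
  · exact mul_le_mul_of_nonneg_right (hmin j (by simpa using hj)) (sq_nonneg _)

end Matrix

theorem div_le_chi_and_chi_le_div {N : Type*} [Fintype N] {A : Matrix N N ℝ} {m M ε δ : ℝ}
    (hm : 0 ≤ m) (hε : 0 < ε) (hle : ∀ μ ∈ eigSet A, μ ≤ M) (hge : ∃ μ ∈ eigSet A, m ≤ μ)
    (hpos : ∀ μ ∈ eigSet A, 0 < μ → ε ≤ μ) (hsmall : ∃ μ ∈ eigSet A, 0 < μ ∧ μ ≤ δ) :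
    m / δ ≤ chi A ∧ chi A ≤ M / ε := by
  obtain ⟨μ₁, hμ₁, hmμ₁⟩ := hge
  obtain ⟨μ₂, hμ₂, hμ₂pos, hμ₂δ⟩ := hsmall
  have hmax : m ≤ lamMax A ∧ lamMax A ≤ M :=
    ⟨hmμ₁.trans (le_csSup (show BddAbove (eigSet A) from ⟨M, hle⟩) hμ₁), csSup_le ⟨μ₁, hμ₁⟩ hle⟩
  have hmin : ε ≤ lamMinPos A ∧ lamMinPos A ≤ δ :=
    ⟨le_csInf ⟨μ₂, hμ₂, hμ₂pos⟩ fun μ hμ => hpos μ hμ.1 hμ.2,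
      (csInf_le (show BddBelow {μ ∈ eigSet A | 0 < μ} from ⟨0, fun μ hμ => hμ.2.le⟩)
        ⟨hμ₂, hμ₂pos⟩).trans hμ₂δ⟩
  exact ⟨div_le_div₀ (hm.trans hmax.1) hmax.1 (hε.trans_le hmin.1) hmin.2,
    div_le_div₀ (hm.trans (hmax.1.trans hmax.2)) hmax.2 hε hmin.1⟩

namespace SimpleGraph

variable {V : Type*} [Fintype V] [DecidableEq V] (G : SimpleGraph V) [DecidableRel G.Adj]

theorem lapMatrix_apply_self (v : V) : G.lapMatrix ℝ v v = G.degree v := by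
  simp [lapMatrix, degMatrix]

theorem le_two_mul_of_mem_eigSet_lapMatrix {d : ℕ} (hd : ∀ v, G.degree v ≤ d) {μ : ℝ}
    (hμ : μ ∈ eigSet (G.lapMatrix ℝ)) : μ ≤ 2 * d := by
  obtain ⟨x, hx, hLx⟩ := hμ
  have hev : Module.End.HasEigenvalue (Matrix.toLin' (G.lapMatrix ℝ)) μ :=
    Module.End.hasEigenvalue_of_hasEigenvector
      ⟨Module.End.mem_eigenspace_iff.mpr (by rw [Matrix.toLin'_apply, hLx]), hx⟩
  obtain ⟨v, hv⟩ := eigenvalue_mem_ball hev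
  have hrow : ∑ w ∈ Finset.univ.erase v, ‖G.lapMatrix ℝ v w‖ = G.degree v := by
    rw [G.degree_eq_sum_if_adj (R := ℝ), ← Finset.sum_erase Finset.univ (a := v) (by simp)]
    refine Finset.sum_congr rfl fun w hw => ?_
    have hvw : v ≠ w := (Finset.ne_of_mem_erase hw).symm
    by_cases h : G.Adj v w <;> simp [lapMatrix, degMatrix, diagonal_apply_ne _ hvw, h]
  rw [Metric.mem_closedBall, Real.dist_eq, hrow, lapMatrix_apply_self] at hv
  linarith [(abs_le.mp hv).2, (show (G.degree v : ℝ) ≤ d by exact_mod_cast hd v)]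

theorem one_le_mul_of_mem_eigSet_lapMatrix {C : ℝ}
    (hC : ∀ x : V → ℝ, ∑ v, x v = 0 → x ⬝ᵥ x ≤ C * (x ⬝ᵥ (G.lapMatrix ℝ *ᵥ x)))
    {μ : ℝ} (hμ : μ ∈ eigSet (G.lapMatrix ℝ)) (hpos : 0 < μ) : 1 ≤ C * μ := by
  obtain ⟨x, hx, hLx⟩ := hμ
  have hsum : ∑ v, x v = 0 := by
    have : μ * ∑ v, x v = (fun _ => 1) ⬝ᵥ (G.lapMatrix ℝ *ᵥ x) := by
      simp [hLx, dotProduct, Finset.mul_sum]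
    rw [dotProduct_mulVec, ← mulVec_transpose, (G.isSymm_lapMatrix (R := ℝ)).eq,
      lapMatrix_mulVec_const_eq_zero, zero_dotProduct] at this
    exact (mul_eq_zero.mp this).resolve_left hpos.ne'
  have hxx : 0 < x ⬝ᵥ x := lt_of_le_of_ne (Finset.sum_nonneg fun v _ => mul_self_nonneg (x v))
    (Ne.symm (dotProduct_self_eq_zero.not.mpr hx))
  have hPoincare := hC x hsum
  rw [hLx, dotProduct_smul, smul_eq_mul, ← mul_assoc] at hPoincare
  nlinarith

theorem exists_pos_mem_eigSet_lapMatrix_mul_le (hG : G.Preconnected) {y : V → ℝ} (hy : y ≠ 0)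
    (hsum : ∑ v, y v = 0) :
    ∃ μ ∈ eigSet (G.lapMatrix ℝ), 0 < μ ∧ μ * (y ⬝ᵥ y) ≤ y ⬝ᵥ (G.lapMatrix ℝ *ᵥ y) := by
  refine (posSemidef_lapMatrix ℝ G).exists_pos_mem_eigSet_mul_le hy fun v hv => ?_
  obtain ⟨u, -⟩ := Function.ne_iff.mp hy
  have hconst : ∀ w, v w = v u :=
    fun w => (G.lapMatrix_mulVec_eq_zero_iff_forall_reachable.mp hv) w u (hG w u)
  simp [dotProduct, hconst, ← Finset.mul_sum, hsum]

end SimpleGraph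

namespace Fin

open Fin.NatCast

variable {n : ℕ}

def cycleDist (i : Fin n) : ℕ := min i.val (n - i.val)

theorem sum_cycleDist_sub_sq_ge (hn : 2 ≤ n) (m : ℝ) :
    (n : ℝ) ^ 3 / 144 ≤ ∑ i : Fin n, ((i.cycleDist : ℝ) - m) ^ 2 := by
  set T := n / 2 + 1
  have hT : (T : ℝ) * (T ^ 2 - 1) / 12 ≤ ∑ t ∈ Finset.range T, ((t : ℝ) - m) ^ 2 := by
    rw [sum_range_sub_sq_eq]
    nlinarith [sq_nonneg (((T : ℝ) - 1) / 2 - m), (Nat.cast_nonneg T : (0 : ℝ) ≤ T)]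
  have hsub : ∑ t ∈ Finset.range T, ((t : ℝ) - m) ^ 2 ≤
      ∑ i : Fin n, ((i.cycleDist : ℝ) - m) ^ 2 := by
    change _ ≤ ∑ i : Fin n, (((min i.val (n - i.val) : ℕ) : ℝ) - m) ^ 2
    rw [Fin.sum_univ_eq_sum_range (fun t => (((min t (n - t) : ℕ) : ℝ) - m) ^ 2)]
    calc ∑ t ∈ Finset.range T, ((t : ℝ) - m) ^ 2
        = ∑ t ∈ Finset.range T, (((min t (n - t) : ℕ) : ℝ) - m) ^ 2 :=
          Finset.sum_congr rfl fun t ht => by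
            rw [Finset.mem_range] at ht
            rw [min_eq_left (by omega)]
      _ ≤ _ := Finset.sum_le_sum_of_subset_of_nonneg
          (Finset.range_subset_range.mpr (by omega)) fun _ _ _ => sq_nonneg _
  have hnT : (n : ℝ) + 1 ≤ 2 * T := by
    have : n + 1 ≤ 2 * T := by omega
    exact_mod_cast this
  have hn2 : (2 : ℝ) ≤ n := by exact_mod_cast hn
  have hcube : (n : ℝ) ^ 3 ≤ (2 * T - 1) ^ 3 := pow_le_pow_left₀ (by positivity) (by linarith) 3
  nlinarith

variable [NeZero n]

theorem val_add_one_eq_mod (i : Fin n) : (i + 1).val = (i.val + 1) % n := by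
  rw [Fin.val_add, Fin.val_one', Nat.add_mod_mod]

theorem add_one_ne (hn : 2 ≤ n) (i : Fin n) : i + 1 ≠ i := by
  rw [Ne, add_eq_left, Fin.ext_iff, Fin.val_one', Fin.val_zero, Nat.mod_eq_of_lt hn]
  exact one_ne_zero

theorem add_one_add_one_ne (hn : 3 ≤ n) (i : Fin n) : i + 1 + 1 ≠ i := by
  rw [Ne, add_assoc, add_eq_left, Fin.ext_iff, Fin.val_add, Fin.val_one', Fin.val_zero,
    Nat.mod_eq_of_lt (by omega : 1 < n), Nat.mod_eq_of_lt (by omega : 1 + 1 < n)]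
  exact two_ne_zero

theorem sq_sub_zero_le_mul_sum_sq_sub (h : Fin n → ℝ) (j : Fin n) :
    (h j - h 0) ^ 2 ≤ n * ∑ i, (h i - h (i + 1)) ^ 2 := by
  have hpath := sq_sub_le_mul_sum_sq_sub (fun t => h t) j
  have hround : ∑ t ∈ Finset.range n, (h ((t + 1 : ℕ) : Fin n) - h t) ^ 2 =
      ∑ i, (h i - h (i + 1)) ^ 2 := by
    rw [← Fin.sum_univ_eq_sum_range (fun t => (h ((t + 1 : ℕ) : Fin n) - h t) ^ 2)]
    simp [Fin.cast_val_eq_self, sub_sq_comm]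
  simp only [Fin.cast_val_eq_self, Nat.cast_zero] at hpath
  refine hpath.trans ?_
  rw [← hround]
  exact mul_le_mul (by exact_mod_cast j.isLt.le)
    (Finset.sum_le_sum_of_subset_of_nonneg (Finset.range_subset_range.mpr j.isLt.le)
      fun _ _ _ => sq_nonneg _) (Finset.sum_nonneg fun _ _ => sq_nonneg _) (by positivity)

theorem cycleDist_sub_add_one_sq_le (i : Fin n) :
    ((i.cycleDist : ℝ) - (i + 1).cycleDist) ^ 2 ≤ 1 := by
  have hi := i.isLt
  have hle : i.cycleDist ≤ (i + 1).cycleDist + 1 ∧ (i + 1).cycleDist ≤ i.cycleDist + 1 := by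
    simp only [cycleDist, val_add_one_eq_mod]
    rcases (show i.val + 1 < n ∨ i.val + 1 = n by omega) with h | h
    · rw [Nat.mod_eq_of_lt h]; omega
    · rw [h, Nat.mod_self]; omega
  have h₁ : (i.cycleDist : ℝ) ≤ (i + 1).cycleDist + 1 := by exact_mod_cast hle.1
  have h₂ : ((i + 1).cycleDist : ℝ) ≤ i.cycleDist + 1 := by exact_mod_cast hle.2
  rw [sq_le_one_iff_abs_le_one, abs_le]
  constructor <;> linarith

end Fin

section RingClique

open Fin.NatCast

variable {n k : ℕ} [NeZero n] [NeZero k]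

theorem ringClique_adj_iff_s16 {u v : Fin n × Fin k} :
    (ringClique n k).Adj u v ↔
      u ≠ v ∧ (u.1 = v.1 ∨ u.2 = 0 ∧ v.2 = 0 ∧ (v.1 = u.1 + 1 ∨ u.1 = v.1 + 1)) := by
  simp only [ringClique, Fin.val_eq_zero_iff, Fin.ext_iff (a := v.1), Fin.ext_iff (a := u.1),
    Fin.val_add_one_eq_mod]

theorem ringClique_preconnected : (ringClique n k).Preconnected := by
  have hring : ∀ t : ℕ, (ringClique n k).Reachable (0, 0) ((t : Fin n), 0) := by
    intro t
    induction t with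
    | zero => simp
    | succ t ih =>
      refine ih.trans ?_
      rw [Nat.cast_succ]
      by_cases h : ((t : Fin n), (0 : Fin k)) = ((t : Fin n) + 1, 0)
      · rw [← h]
      · exact (ringClique_adj_iff_s16.mpr ⟨h, Or.inr ⟨rfl, rfl, Or.inl rfl⟩⟩).reachable
  have hall : ∀ u : Fin n × Fin k, (ringClique n k).Reachable (0, 0) u := by
    rintro ⟨i, a⟩
    refine (Fin.cast_val_eq_self i ▸ hring i.val).trans ?_
    by_cases ha : a = 0
    · rw [ha]
    · exact (ringClique_adj_iff_s16.mpr ⟨fun h => ha (Prod.mk.inj h).2.symm, Or.inl rfl⟩).reachable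
  exact fun u v => (hall u).symm.trans (hall v)

theorem ringClique_degree_le (v : Fin n × Fin k) : (ringClique n k).degree v ≤ k + 2 := by
  have hsub : (ringClique n k).neighborFinset v ⊆
      Finset.univ.image (fun b => (v.1, b)) ∪ {(v.1 + 1, 0), (v.1 - 1, 0)} := by
    intro w hw
    rw [SimpleGraph.mem_neighborFinset, ringClique_adj_iff_s16] at hw
    obtain ⟨-, h | ⟨-, hw₂, h | h⟩⟩ := hw
    · exact Finset.mem_union_left _ (Finset.mem_image.mpr ⟨w.2, Finset.mem_univ _, by rw [h]⟩)
    · simp [Prod.ext_iff, h, hw₂]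
    · simp [Prod.ext_iff, h, hw₂]
  rw [← SimpleGraph.card_neighborFinset_eq_degree]
  refine (Finset.card_le_card hsub).trans ((Finset.card_union_le _ _).trans (add_le_add ?_ ?_))
  · exact Finset.card_image_le.trans (by simp)
  · exact Finset.card_le_two

theorem ringClique_degree_ge (v : Fin n × Fin k) : k ≤ (ringClique n k).degree v + 1 := by
  have hsub : (Finset.univ.erase v.2).image (fun b => (v.1, b)) ⊆
      (ringClique n k).neighborFinset v := by
    intro w hw
    obtain ⟨b, hb, rfl⟩ := Finset.mem_image.mp hw
    rw [SimpleGraph.mem_neighborFinset, ringClique_adj_iff_s16]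
    exact ⟨fun h => Finset.ne_of_mem_erase hb (congrArg Prod.snd h).symm, Or.inl rfl⟩
  have := Finset.card_le_card hsub
  rw [Finset.card_image_of_injective _ (fun a b h => (Prod.mk.inj h).2),
    Finset.card_erase_of_mem (Finset.mem_univ _), Finset.card_univ, Fintype.card_fin,
    SimpleGraph.card_neighborFinset_eq_degree] at this
  omega

theorem ringClique_adj_ite_sq_eq (hn : 3 ≤ n) (x : Fin n × Fin k → ℝ) (u v : Fin n × Fin k) :
    (if (ringClique n k).Adj u v then (x u - x v) ^ 2 else 0) =
      (if u.1 = v.1 then (x u - x v) ^ 2 else 0) +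
      (if u.2 = 0 ∧ v = (u.1 + 1, 0) then (x u - x v) ^ 2 else 0) +
      (if v.2 = 0 ∧ u = (v.1 + 1, 0) then (x u - x v) ^ 2 else 0) := by
  obtain ⟨i, a⟩ := u
  obtain ⟨j, b⟩ := v
  have hn1 : n ≠ 1 := by omega
  have h₁ : ∀ i : Fin n, i ≠ i + 1 := fun i => (Fin.add_one_ne (by omega) i).symm
  have h₂ : ∀ i : Fin n, i ≠ i + 1 + 1 := fun i => (Fin.add_one_add_one_ne hn i).symm
  simp only [ringClique_adj_iff_s16, Prod.mk.injEq, ne_eq]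
  by_cases hij : i = j
  · subst hij
    by_cases hab : a = b
    · simp [hab]
    · simp [hab, h₁]
  · by_cases hj : j = i + 1
    · subst hj
      simp [h₂, hn1]
    · by_cases hi : i = j + 1
      · subst hi
        simp [h₂, hn1, and_comm]
      · simp [hij, hj, hi]

theorem ringClique_sum_adj_ite_sq_eq (hn : 3 ≤ n) (x : Fin n × Fin k → ℝ) :
    ∑ u, ∑ v, (if (ringClique n k).Adj u v then (x u - x v) ^ 2 else 0) =
      ∑ i, ∑ a, ∑ b, (x (i, a) - x (i, b)) ^ 2 + 2 * ∑ i, (x (i, 0) - x (i + 1, 0)) ^ 2 := by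
  have hclique : ∑ u : Fin n × Fin k, ∑ v : Fin n × Fin k,
      (if u.1 = v.1 then (x u - x v) ^ 2 else 0) = ∑ i, ∑ a, ∑ b, (x (i, a) - x (i, b)) ^ 2 := by
    simp_rw [Fintype.sum_prod_type]
    refine Finset.sum_congr rfl fun i _ => Finset.sum_congr rfl fun a _ => ?_
    rw [Finset.sum_eq_single i (fun j _ hj => by simp [Ne.symm hj]) (by simp)]
    simp
  have hring : ∑ u : Fin n × Fin k, ∑ v : Fin n × Fin k,
      (if u.2 = 0 ∧ v = (u.1 + 1, 0) then (x u - x v) ^ 2 else 0) =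
        ∑ i, (x (i, 0) - x (i + 1, 0)) ^ 2 := by
    simp only [ite_and, Finset.sum_ite_irrel, Finset.sum_const_zero, Finset.sum_ite_eq',
      Finset.mem_univ, if_true]
    rw [Fintype.sum_prod_type]
    refine Finset.sum_congr rfl fun i _ => ?_
    rw [Finset.sum_ite_eq']
    simp
  have hring' : ∑ u : Fin n × Fin k, ∑ v : Fin n × Fin k,
      (if v.2 = 0 ∧ u = (v.1 + 1, 0) then (x u - x v) ^ 2 else 0) =
        ∑ i, (x (i, 0) - x (i + 1, 0)) ^ 2 := by
    rw [Finset.sum_comm, ← hring]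
    exact Finset.sum_congr rfl fun u _ => Finset.sum_congr rfl fun v _ => by rw [sub_sq_comm]
  simp only [ringClique_adj_ite_sq_eq hn, Finset.sum_add_distrib, hclique, hring, hring']
  ring

theorem ringClique_dotProduct_lapMatrix_mulVec (hn : 3 ≤ n) (x : Fin n × Fin k → ℝ) :
    x ⬝ᵥ ((ringClique n k).lapMatrix ℝ *ᵥ x) =
      (∑ i, ∑ a, ∑ b, (x (i, a) - x (i, b)) ^ 2) / 2 + ∑ i, (x (i, 0) - x (i + 1, 0)) ^ 2 := by
  rw [← toLinearMap₂'_apply', SimpleGraph.lapMatrix_toLinearMap₂', ringClique_sum_adj_ite_sq_eq hn]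
  ring

theorem ringClique_dotProduct_self_le (hn : 3 ≤ n) {x : Fin n × Fin k → ℝ}
    (hx : ∑ u, x u = 0) :
    x ⬝ᵥ x ≤ 4 * k * n ^ 2 * (x ⬝ᵥ ((ringClique n k).lapMatrix ℝ *ᵥ x)) := by
  set Q := ∑ i, ∑ a, (x (i, a) - x (i, 0)) ^ 2
  set D := ∑ i, (x (i, 0) - x (i + 1, 0)) ^ 2
  have hQ : 0 ≤ Q := by positivity
  have hD : 0 ≤ D := by positivity
  have hkn : (1 : ℝ) ≤ k * n ^ 2 := by
    have hk : (1 : ℝ) ≤ k := by exact_mod_cast NeZero.one_le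
    have hn : (1 : ℝ) ≤ n := by exact_mod_cast NeZero.one_le
    exact one_le_mul_of_one_le_of_one_le hk (one_le_pow₀ hn)
  have hspoke : ∀ i a, (x (i, a) - x (0, 0)) ^ 2 ≤ 2 * (x (i, a) - x (i, 0)) ^ 2 + 2 * (n * D) :=
    fun i a => by
      have := Fin.sq_sub_zero_le_mul_sum_sq_sub (fun j => x (j, 0)) i
      nlinarith [sq_nonneg (x (i, a) + x (0, 0) - 2 * x (i, 0))]
  have hnorm : x ⬝ᵥ x ≤ 2 * Q + 2 * k * n ^ 2 * D := calc
    x ⬝ᵥ x ≤ ∑ u, (x u - x (0, 0)) ^ 2 := dotProduct_self_le_sum_sub_sq hx _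
    _ ≤ ∑ i, ∑ a, (2 * (x (i, a) - x (i, 0)) ^ 2 + 2 * (n * D)) := by
      rw [Fintype.sum_prod_type]
      exact Finset.sum_le_sum fun i _ => Finset.sum_le_sum fun a _ => hspoke i a
    _ = 2 * Q + 2 * k * n ^ 2 * D := by
      simp only [Finset.sum_add_distrib, ← Finset.mul_sum, Finset.sum_const, Finset.card_univ,
        Fintype.card_fin, nsmul_eq_mul]
      ring
  have henergy : Q / 2 + D ≤ x ⬝ᵥ ((ringClique n k).lapMatrix ℝ *ᵥ x) := by
    have hclique : Q ≤ ∑ i, ∑ a, ∑ b, (x (i, a) - x (i, b)) ^ 2 :=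
      Finset.sum_le_sum fun i _ => Finset.sum_le_sum fun a _ =>
        Finset.single_le_sum (f := fun b => (x (i, a) - x (i, b)) ^ 2)
          (fun _ _ => sq_nonneg _) (Finset.mem_univ 0)
    rw [ringClique_dotProduct_lapMatrix_mulVec hn]
    linarith
  nlinarith
theorem ringClique_le_of_mem_eigSet {μ : ℝ} (hμ : μ ∈ eigSet ((ringClique n k).lapMatrix ℝ)) :
    μ ≤ 2 * (k + 2) := by
  exact_mod_cast (ringClique n k).le_two_mul_of_mem_eigSet_lapMatrix ringClique_degree_le hμ

theorem ringClique_exists_ge_mem_eigSet :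
    ∃ μ ∈ eigSet ((ringClique n k).lapMatrix ℝ), (k : ℝ) - 1 ≤ μ := by
  refine ((ringClique n k).isHermitian_lapMatrix ℝ).exists_le_mem_eigSet_of_le_diag fun v => ?_
  rw [SimpleGraph.lapMatrix_apply_self, sub_le_iff_le_add]
  exact_mod_cast ringClique_degree_ge v

theorem ringClique_ge_of_pos_mem_eigSet (hn : 3 ≤ n) {μ : ℝ}
    (hμ : μ ∈ eigSet ((ringClique n k).lapMatrix ℝ)) (hpos : 0 < μ) :
    1 / (4 * k * n ^ 2) ≤ μ := by
  have hk : (0 : ℝ) < k := by exact_mod_cast Nat.pos_of_neZero k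
  have hμ' := (ringClique n k).one_le_mul_of_mem_eigSet_lapMatrix
    (fun _ hx => ringClique_dotProduct_self_le hn hx) hμ hpos
  rw [div_le_iff₀ (by positivity)]
  linarith

theorem ringClique_exists_pos_mem_eigSet_le (hn : 3 ≤ n) :
    ∃ μ ∈ eigSet ((ringClique n k).lapMatrix ℝ), 0 < μ ∧ μ ≤ 144 / (k * n ^ 2) := by
  have hk : (0 : ℝ) < k := by exact_mod_cast Nat.pos_of_neZero k
  have hn0 : (0 : ℝ) < n := by exact_mod_cast Nat.pos_of_neZero n
  set m : ℝ := (∑ i : Fin n, (i.cycleDist : ℝ)) / n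
  set y : Fin n × Fin k → ℝ := fun u => u.1.cycleDist - m
  have hsum : ∑ u, y u = 0 := by
    simp only [y, m, Fintype.sum_prod_type, Finset.sum_const, Finset.card_univ, Fintype.card_fin,
      nsmul_eq_mul, ← Finset.mul_sum, Finset.sum_sub_distrib, Fintype.card_prod, Nat.cast_mul]
    field_simp
    ring
  have hyy : k * (n ^ 3 / 144) ≤ y ⬝ᵥ y := by
    have : y ⬝ᵥ y = k * ∑ i : Fin n, ((i.cycleDist : ℝ) - m) ^ 2 := by
      simp only [dotProduct, y, Fintype.sum_prod_type, Finset.sum_const, Finset.card_univ,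
        Fintype.card_fin, nsmul_eq_mul, ← Finset.mul_sum, sq]
    rw [this]
    gcongr
    exact Fin.sum_cycleDist_sub_sq_ge (by omega) m
  have hyLy : y ⬝ᵥ ((ringClique n k).lapMatrix ℝ *ᵥ y) ≤ n := by
    rw [ringClique_dotProduct_lapMatrix_mulVec hn]
    simp only [y, sub_sub_sub_cancel_right, sub_self, zero_pow two_ne_zero,
      Finset.sum_const_zero, zero_div, zero_add]
    calc ∑ i : Fin n, ((i.cycleDist : ℝ) - (i + 1).cycleDist) ^ 2 ≤ ∑ _i : Fin n, (1 : ℝ) :=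
          Finset.sum_le_sum fun i _ => i.cycleDist_sub_add_one_sq_le
      _ = n := by simp
  have hy : y ≠ 0 := by
    rintro h
    rw [h, zero_dotProduct] at hyy
    have : (0 : ℝ) < k * (n ^ 3 / 144) := by positivity
    linarith
  obtain ⟨μ, hμ, hpos, hle⟩ :=
    (ringClique n k).exists_pos_mem_eigSet_lapMatrix_mul_le ringClique_preconnected hy hsum
  refine ⟨μ, hμ, hpos, ?_⟩
  rw [le_div_iff₀ (by positivity)]
  nlinarith [mul_le_mul_of_nonneg_left hyy hpos.le]

end RingClique

theorem chi_ringClique_order :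
    ∃ c₁ c₂ : ℝ, 0 < c₁ ∧ c₁ ≤ c₂ ∧ ∀ n k : ℕ, 3 ≤ n → 2 ≤ k →
      c₁ * ((n : ℝ) ^ 2 * (k : ℝ) ^ 2) ≤ chi ((ringClique n k).lapMatrix ℝ) ∧
      chi ((ringClique n k).lapMatrix ℝ) ≤ c₂ * ((n : ℝ) ^ 2 * (k : ℝ) ^ 2) := by
  refine ⟨1 / 288, 16, by norm_num, by norm_num, fun n k hn hk => ?_⟩
  have : NeZero n := ⟨by omega⟩
  have : NeZero k := ⟨by omega⟩
  have hk2 : (2 : ℝ) ≤ k := by exact_mod_cast hk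
  have hn3 : (3 : ℝ) ≤ n := by exact_mod_cast hn
  obtain ⟨hlow, hup⟩ := div_le_chi_and_chi_le_div (by linarith) (by positivity)
    (fun _ hμ => ringClique_le_of_mem_eigSet hμ) ringClique_exists_ge_mem_eigSet
    (fun _ hμ hpos => ringClique_ge_of_pos_mem_eigSet hn hμ hpos)
    (ringClique_exists_pos_mem_eigSet_le hn)
  rw [div_div_eq_mul_div] at hlow
  rw [one_div, div_inv_eq_mul] at hup
  constructor <;> nlinarith
end
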